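/- arXiv:2011.00330 — 2 statements merged into one kernel-verified Lean document; each statement's English description precedes it below -/
import Mathlib

section
/- Fix integers n ≥ 2, k ≥ 1 with 2^k ≤ n, and a real T > 0, and let λ : ℝ≥0 → ℝ≥0 be an increasing bijection. Define x(k) = ⌊ λ⁻¹(T/⌈log_{2^k}(n)⌉) / (2^{k·⌈log_{2^k}(n)⌉}·(2^k − 1)) ⌋ and, for stage r with surviving set S_{r+1}, t_r = ⌊ λ⁻¹(T/⌈log_{2^k}(n)⌉) / |S_{r+1}| ⌋ where |S_{r+1}| = ⌈n/2^{(r+1)k}⌉. Then for all stages r ≥ 0, t_r ≥ 2^{rk}·(2^k − 1)·x(k). -/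
/-!
With `L = ⌈log_{2^k} n⌉ = Nat.clog (2^k) n` we have `n ≤ (2^k)^L`, so the surviving set of
stage `r` has at most `2^{k(L-r-1)}` arms and `2^{rk}(2^k-1)|S_{r+1}| ≤ 2^{kL}(2^k-1)`.
The bound then follows from `c⌊a/D⌋ ≤ ⌊a/d⌋` whenever `c d ≤ D`.
-/

theorem Nat.mul_floor_div_le_floor_div (c : ℕ) {a D d : ℝ} (hd : 0 < d) (hcd : c * d ≤ D) :
    c * ⌊a / D⌋₊ ≤ ⌊a / d⌋₊ := by
  rcases c.eq_zero_or_pos with rfl | hc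
  · simp
  have hD : 0 < D := lt_of_lt_of_le (by positivity) hcd
  rcases le_or_gt a 0 with ha | ha
  · simp [Nat.floor_of_nonpos (div_nonpos_of_nonpos_of_nonneg ha hD.le)]
  apply Nat.le_floor
  push_cast
  calc (c : ℝ) * ⌊a / D⌋₊ ≤ c * (a / D) := by gcongr; exact Nat.floor_le (by positivity)
    _ ≤ a / d := by
      rw [mul_div_assoc', div_le_div_iff₀ hD hd, mul_comm (c : ℝ), mul_assoc]
      gcongr

theorem Nat.pow_mul_ceil_div_pow_succ_le {q r L : ℕ} {x : ℝ} (hq : 0 < q) (hr : r < L)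
    (hx : x ≤ q ^ L) : q ^ r * ⌈x / q ^ (r + 1)⌉₊ ≤ q ^ L := by
  have hceil : ⌈x / q ^ (r + 1)⌉₊ ≤ q ^ (L - (r + 1)) := by
    rw [Nat.ceil_le, div_le_iff₀ (by positivity)]
    push_cast
    rwa [← pow_add, Nat.sub_add_cancel hr]
  calc q ^ r * ⌈x / q ^ (r + 1)⌉₊ ≤ q ^ (r + 1) * q ^ (L - (r + 1)) := by
        gcongr; omega
    _ = q ^ L := by rw [← pow_add, Nat.add_sub_cancel' hr]

theorem ssh_pull_bound_general
    (g : ℝ → ℝ) (n k : ℕ) (T : ℝ)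
    (hn : 2 ≤ n) (hk : 1 ≤ k) :
    ∀ r : ℕ, r < ⌈Real.logb (2 ^ k) n⌉₊ →
      2 ^ (r * k) * (2 ^ k - 1) *
          ⌊g (T / ⌈Real.logb (2 ^ k) n⌉₊) /
            ((2 : ℝ) ^ (k * ⌈Real.logb (2 ^ k) n⌉₊) * ((2 : ℝ) ^ k - 1))⌋₊
        ≤ ⌊g (T / ⌈Real.logb (2 ^ k) n⌉₊) /
            ((⌈(n : ℝ) / 2 ^ ((r + 1) * k)⌉₊ : ℕ) : ℝ)⌋₊ := by
  intro r hr
  have hq : 1 < 2 ^ k := Nat.one_lt_two_pow (by omega)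
  have hL : ⌈Real.logb (2 ^ k) n⌉₊ = Nat.clog (2 ^ k) n := by
    exact_mod_cast Real.natCeil_logb_natCast (2 ^ k) n
  set L := ⌈Real.logb (2 ^ k) n⌉₊
  have hpow : ∀ m, (2 : ℝ) ^ (m * k) = ((2 ^ k : ℕ) : ℝ) ^ m := fun m => by
    rw [mul_comm, pow_mul]; push_cast; rfl
  have hstages : (2 : ℝ) ^ (r * k) * ⌈(n : ℝ) / 2 ^ ((r + 1) * k)⌉₊ ≤ 2 ^ (k * L) := by
    rw [hpow r, hpow (r + 1), mul_comm k L, hpow L]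
    exact_mod_cast Nat.pow_mul_ceil_div_pow_succ_le (by omega) hr
      (by rw [hL]; exact_mod_cast Nat.le_pow_clog hq n)
  apply Nat.mul_floor_div_le_floor_div
  · exact_mod_cast Nat.ceil_pos.mpr (by positivity)
  · push_cast [Nat.cast_sub hq.le]
    rw [mul_right_comm]
    exact mul_le_mul_of_nonneg_right hstages (sub_nonneg.mpr (one_le_pow₀ one_le_two))

/-- Pull-count lower bound for Staged Sequential Halving: with `L = ⌈log_{2^k} n⌉`
stages each of duration `T/L`, scaling function `f` (an increasing bijection of
`[0,∞)` with inverse `g`), per-stage pulls per arm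
`t_r = ⌊g(T/L) / |S_{r+1}|⌋` with `|S_{r+1}| = ⌈n/2^{(r+1)k}⌉`, and
`x(k) = ⌊g(T/L) / (2^{kL}(2^k − 1))⌋`, we have `t_r ≥ 2^{rk}(2^k − 1)·x(k)`
for every stage `r`. -/
theorem ssh_pull_bound
    (f g : ℝ → ℝ) (n k : ℕ) (T : ℝ)
    (hn : 2 ≤ n) (hk : 1 ≤ k) (hkn : 2 ^ k ≤ n) (hT : 0 < T)
    (hmono : StrictMonoOn f (Set.Ici (0:ℝ)))
    (hf0 : f 0 = 0)
    (hfnonneg : ∀ x : ℝ, 0 ≤ x → 0 ≤ f x)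
    (hg : ∀ t : ℝ, 0 ≤ t → 0 ≤ g t ∧ f (g t) = t)
    (hgf : ∀ x : ℝ, 0 ≤ x → g (f x) = x) :
    ∀ r : ℕ, r < ⌈Real.logb (2 ^ k) n⌉₊ →
      2 ^ (r * k) * (2 ^ k - 1) *
          ⌊g (T / ⌈Real.logb (2 ^ k) n⌉₊) /
            ((2 : ℝ) ^ (k * ⌈Real.logb (2 ^ k) n⌉₊) * ((2 : ℝ) ^ k - 1))⌋₊
        ≤ ⌊g (T / ⌈Real.logb (2 ^ k) n⌉₊) /
            ((⌈(n : ℝ) / 2 ^ ((r + 1) * k)⌉₊ : ℕ) : ℝ)⌋₊ :=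
  ssh_pull_bound_general g n k T hn hk
end

section
/- Let δ ∈ (0, 1/2). Then d(δ, 1−δ) ≥ log(1/(2.4δ)), where d(x,y) = x·log(x/y) + (1−x)·log((1−x)/(1−y)) is the binary KL divergence. -/
/-!
Since `d(δ, 1 - δ) = (1 - 2δ) log ((1 - δ) / δ)`, the claim is `f δ ≥ -log (12/5)` for
`f δ = 2δ log δ + (1 - 2δ) log (1 - δ) = 2 φ δ + 2 φ (1 - δ) - log (1 - δ)`, `φ x = x log x`.
Each of the three summands is convex and lies above its tangent lines (all instances of
`log x ≤ x - 1`), so `f` lies above its tangent lines. The tangents at `δ = 1/4` and `δ = 1/3`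
involve only `log 2` and `log 3`, and they stay above `-log (12/5)` on `δ ≤ 7/25` and on
`δ ≥ 7/25` respectively, with a margin of about `0.002`.
-/

open Real

lemma mul_log_le_mul_log_add_sub {x y : ℝ} (hx : 0 < x) (hy : 0 < y) :
    x * log y ≤ x * log x + (y - x) := by
  have h := mul_le_mul_of_nonneg_left (log_le_sub_one_of_pos (div_pos hy hx)) hx.le
  rw [log_div hy.ne' hx.ne', mul_sub, mul_sub, mul_div_cancel₀ _ hx.ne'] at h
  linarith

lemma tangent_le_two_mul_mul_log_add_mul_log_one_sub {δ a : ℝ} (hδ0 : 0 < δ) (hδ1 : δ < 1)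
    (ha0 : 0 < a) (ha1 : a < 1) :
    2 * δ * log a + (1 - 2 * δ) * log (1 - a) + (δ - a) / (1 - a) ≤
      2 * δ * log δ + (1 - 2 * δ) * log (1 - δ) := by
  have hδ : 0 < 1 - δ := by linarith
  have ha : 0 < 1 - a := by linarith
  have h₁ := mul_log_le_mul_log_add_sub hδ0 ha0
  have h₂ := mul_log_le_mul_log_add_sub hδ ha
  have h₃ := log_le_sub_one_of_pos (div_pos hδ ha)
  rw [log_div hδ.ne' ha.ne', div_sub_one ha.ne'] at h₃
  have : (1 - δ - (1 - a)) / (1 - a) = -((δ - a) / (1 - a)) := by ring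
  linarith

lemma neg_log_twelve_div_five_le {δ : ℝ} (hδ0 : 0 < δ) (hδ1 : δ < 1) :
    -log (12 / 5) ≤ 2 * δ * log δ + (1 - 2 * δ) * log (1 - δ) := by
  have log_four : log 4 = 2 * log 2 := by
    rw [show (4 : ℝ) = 2 ^ 2 by norm_num, log_pow, Nat.cast_ofNat]
  have log_twelve : log 12 = log 3 + log 4 := by
    rw [← log_mul (by norm_num) (by norm_num)]; norm_num
  rw [log_div (by norm_num) (by norm_num), log_twelve, log_four]
  have := log_two_gt_d9
  have := log_two_lt_d9
  have := log_three_gt_d9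
  have := log_three_lt_d9
  have := log_five_gt_d9
  have := log_five_lt_d9
  rcases le_total δ (7 / 25) with hδ | hδ
  · have tangent := tangent_le_two_mul_mul_log_add_mul_log_one_sub hδ0 hδ1
      (by norm_num : (0 : ℝ) < 1 / 4) (by norm_num)
    rw [show (1 - 1 / 4 : ℝ) = 3 / 4 by norm_num, one_div, log_inv,
      log_div (by norm_num) (by norm_num), log_four] at tangent
    linarith [mul_nonneg (by linarith : (0 : ℝ) ≤ 7 / 25 - δ)
      (by linarith : (0 : ℝ) ≤ 2 * log 3 - 4 / 3)]
  · have tangent := tangent_le_two_mul_mul_log_add_mul_log_one_sub hδ0 hδ1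
      (by norm_num : (0 : ℝ) < 1 / 3) (by norm_num)
    rw [show (1 - 1 / 3 : ℝ) = 2 / 3 by norm_num, one_div, log_inv,
      log_div (by norm_num) (by norm_num)] at tangent
    linarith [mul_nonneg (by linarith : (0 : ℝ) ≤ δ - 7 / 25)
      (by linarith : (0 : ℝ) ≤ 3 / 2 - 2 * log 2)]

/-- Binary KL divergence bound: for `δ ∈ (0, 1/2)`,
`d(δ, 1−δ) ≥ log(1/(2.4 δ))` where `d` is the Bernoulli KL divergence. -/
theorem binary_kl_lower_bound (δ : ℝ) (h0 : 0 < δ) (h1 : δ < 1 / 2) :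
    Real.log (1 / (2.4 * δ)) ≤
      δ * Real.log (δ / (1 - δ)) + (1 - δ) * Real.log ((1 - δ) / δ) := by
  have hδ : 0 < 1 - δ := by linarith
  have h := neg_log_twelve_div_five_le h0 (by linarith)
  rw [one_div, log_inv, log_mul (by norm_num) h0.ne', log_div h0.ne' hδ.ne',
    log_div hδ.ne' h0.ne', show (2.4 : ℝ) = 12 / 5 by norm_num]
  linarith
end
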